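/- Let p be a prime and t ≥ 1. For any unit m in ℤ/p^t ℤ, the number of quadruples (x1, x2, x3, x4) in (ℤ/p^t ℤ)^4 with x1*x2 - x3*x4 ≡ m (mod p^t) equals p^{3t} - p^{3t-2}. -/
import Mathlib

lemma unit_iff' (p t : ℕ) (hp : p.Prime) (ht : 1 ≤ t) (a : ZMod (p^t)) :
    IsUnit a ↔ ¬ p ∣ a.val := by
  haveI : NeZero (p ^ t) := ⟨pow_ne_zero _ hp.pos.ne'⟩
  have h := ZMod.isUnit_iff_coprime a.val (p ^ t)
  rw [ZMod.natCast_val, ZMod.cast_id] at h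
  rw [h, Nat.coprime_pow_right_iff ht, Nat.coprime_comm, hp.coprime_iff_not_dvd]

lemma nonunit_add (p t : ℕ) (hp : p.Prime) (ht : 1 ≤ t) (a b : ZMod (p^t))
    (ha : ¬ IsUnit a) (hb : ¬ IsUnit b) : ¬ IsUnit (a + b) := by
  haveI : NeZero (p ^ t) := ⟨pow_ne_zero _ hp.pos.ne'⟩
  rw [unit_iff' p t hp ht, not_not] at ha hb ⊢
  rw [ZMod.val_add, Nat.dvd_mod_iff (dvd_pow_self p (by omega))]
  exact Nat.dvd_add ha hb

section aux

variable {R : Type*} [CommRing R] (m : R)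

/-- Solutions of x1*x2 - x3*x4 = m. -/
abbrev Sol (m : R) := {x : R × R × R × R // x.1 * x.2.1 - x.2.2.1 * x.2.2.2 = m}

def g1 : Rˣ × R × R → {x : Sol m // IsUnit x.val.1} := fun y =>
  ⟨⟨((y.1 : R), (↑y.1⁻¹ : R) * (m + y.2.1 * y.2.2), y.2.1, y.2.2), by
    show (y.1 : R) * ((↑y.1⁻¹ : R) * (m + y.2.1 * y.2.2)) - y.2.1 * y.2.2 = m
    rw [← mul_assoc, Units.mul_inv, one_mul]; ring⟩, y.1.isUnit⟩

lemma g1_bij : Function.Bijective (g1 m) := by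
  constructor
  · intro y y' h
    have h' := congrArg (fun z : {x : Sol m // IsUnit x.val.1} =>
      (z.val : R × R × R × R)) h
    obtain ⟨u, c, d⟩ := y; obtain ⟨u', c', d'⟩ := y'
    simp only [g1, Prod.mk.injEq] at h'
    obtain ⟨h1, _, h3, h4⟩ := h'
    exact Prod.ext (Units.ext h1) (Prod.ext h3 h4)
  · rintro ⟨⟨⟨a, b, c, d⟩, hx⟩, hu⟩
    refine ⟨⟨hu.unit, c, d⟩, ?_⟩
    apply Subtype.ext; apply Subtype.ext
    have ha : (hu.unit : R) = a := hu.unit_spec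
    have hmb : m + c * d = a * b := by rw [← hx]; ring
    show ((hu.unit : R), (↑hu.unit⁻¹ : R) * (m + c * d), c, d) = (a, b, c, d)
    have hbb : (↑hu.unit⁻¹ : R) * (m + c * d) = b := by
      rw [Units.inv_mul_eq_iff_eq_mul, hmb, ha]
    rw [ha, hbb]

def g2 : {a : R // ¬ IsUnit a} × R × Rˣ → {x : Sol m // ¬ IsUnit x.val.1} := fun y =>
  ⟨⟨(y.1.val, y.2.1, (y.2.2 : R), (↑y.2.2⁻¹ : R) * (y.1.val * y.2.1 - m)), by
    show y.1.val * y.2.1 - (y.2.2 : R) * ((↑y.2.2⁻¹ : R) * (y.1.val * y.2.1 - m)) = m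
    rw [← mul_assoc, Units.mul_inv, one_mul]; ring⟩, y.1.prop⟩

lemma g2_bij (key : ∀ a b : R, ¬ IsUnit a → IsUnit (a * b - m)) :
    Function.Bijective (g2 m) := by
  constructor
  · intro y y' h
    have h' := congrArg (fun z : {x : Sol m // ¬ IsUnit x.val.1} =>
      (z.val : R × R × R × R)) h
    obtain ⟨⟨a, ha⟩, b, u⟩ := y; obtain ⟨⟨a', ha'⟩, b', u'⟩ := y'
    simp only [g2, Prod.mk.injEq] at h'
    obtain ⟨h1, h2, h3, _⟩ := h'
    exact Prod.ext (Subtype.ext h1) (Prod.ext h2 (Units.ext h3))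
  · rintro ⟨⟨⟨a, b, c, d⟩, hx⟩, hna⟩
    have hcd : IsUnit (c * d) := by
      have h1 := key a b hna
      have h2 : a * b - m = c * d := by rw [← hx]; ring
      rwa [h2] at h1
    have hc : IsUnit c := isUnit_of_mul_isUnit_left hcd
    refine ⟨⟨⟨a, hna⟩, b, hc.unit⟩, ?_⟩
    apply Subtype.ext; apply Subtype.ext
    have hcc : (hc.unit : R) = c := hc.unit_spec
    have h2 : a * b - m = c * d := by rw [← hx]; ring
    show (a, b, (hc.unit : R), (↑hc.unit⁻¹ : R) * (a * b - m)) = (a, b, c, d)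
    have hdd : (↑hc.unit⁻¹ : R) * (a * b - m) = d := by
      rw [Units.inv_mul_eq_iff_eq_mul, h2, hcc]
    rw [hcc, hdd]

end aux

theorem stmt_6 (p : ℕ) (hp : p.Prime) (t : ℕ) (ht : 1 ≤ t)
    (m : ZMod (p ^ t)) (hm : IsUnit m) :
    Nat.card {x : ZMod (p ^ t) × ZMod (p ^ t) × ZMod (p ^ t) × ZMod (p ^ t) //
      x.1 * x.2.1 - x.2.2.1 * x.2.2.2 = m} = p ^ (3 * t) - p ^ (3 * t - 2) := by
  classical
  haveI : Fact p.Prime := ⟨hp⟩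
  haveI : NeZero (p ^ t) := ⟨pow_ne_zero _ hp.pos.ne'⟩
  have key : ∀ a b : ZMod (p ^ t), ¬ IsUnit a → IsUnit (a * b - m) := by
    intro a b ha
    by_contra h
    have hab : ¬ IsUnit (a * b) := fun h' => ha (isUnit_of_mul_isUnit_left h')
    have hneg : ¬ IsUnit (-(a * b - m)) := fun h' => h (by simpa using h'.neg)
    have hkey := nonunit_add p t hp ht (a * b) (-(a * b - m)) hab hneg
    apply hkey
    have heq : a * b + -(a * b - m) = m := by ring
    rw [heq]; exact hm
  have hsplit : Nat.card (Sol m) =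
      Nat.card {x : Sol m // IsUnit x.val.1} +
        Nat.card {x : Sol m // ¬ IsUnit x.val.1} := by
    rw [← Nat.card_sum]
    exact Nat.card_congr (Equiv.sumCompl (fun x : Sol m => IsUnit x.val.1)).symm
  have hc1 : Nat.card {x : Sol m // IsUnit x.val.1} =
      Nat.card (ZMod (p ^ t))ˣ * (p ^ t * p ^ t) := by
    rw [← Nat.card_eq_of_bijective (g1 m) (g1_bij m), Nat.card_prod, Nat.card_prod,
      Nat.card_zmod]
  have hc2 : Nat.card {x : Sol m // ¬ IsUnit x.val.1} =
      Nat.card {a : ZMod (p ^ t) // ¬ IsUnit a} * (p ^ t * Nat.card (ZMod (p ^ t))ˣ) := by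
    rw [← Nat.card_eq_of_bijective (g2 m) (g2_bij m key), Nat.card_prod, Nat.card_prod,
      Nat.card_zmod]
  have hu : Nat.card (ZMod (p ^ t))ˣ = p ^ (t - 1) * (p - 1) := by
    rw [Nat.card_eq_fintype_card, ZMod.card_units_eq_totient,
      Nat.totient_prime_pow hp ht]
  have heu : Nat.card (ZMod (p ^ t))ˣ = Nat.card {a : ZMod (p ^ t) // IsUnit a} :=
    Nat.card_eq_of_bijective (fun u => ⟨(u : ZMod (p ^ t)), u.isUnit⟩)
      ⟨fun u v h => Units.ext (congrArg Subtype.val h),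
       fun ⟨a, ha⟩ => ⟨ha.unit, Subtype.ext ha.unit_spec⟩⟩
  have hsum : Nat.card {a : ZMod (p ^ t) // IsUnit a} +
      Nat.card {a : ZMod (p ^ t) // ¬ IsUnit a} = p ^ t := by
    have h0 := Nat.card_congr (Equiv.sumCompl (fun a : ZMod (p ^ t) => IsUnit a))
    rwa [Nat.card_sum, Nat.card_zmod] at h0
  have hnu : Nat.card {a : ZMod (p ^ t) // ¬ IsUnit a} = p ^ (t - 1) := by
    rw [← heu, hu] at hsum
    have hps : p ^ t = p ^ (t - 1) * p := by
      conv_lhs => rw [show t = (t - 1) + 1 by omega]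
      exact pow_succ p (t - 1)
    have hexp : p ^ (t - 1) * (p - 1) + p ^ (t - 1) = p ^ (t - 1) * p := by
      rw [← Nat.mul_succ]; congr 1; have := hp.pos; omega
    omega
  rw [hsplit, hc1, hc2, hu, hnu]
  obtain ⟨s, rfl⟩ : ∃ s, t = s + 1 := ⟨t - 1, by omega⟩
  simp only [Nat.add_sub_cancel]
  have e1 : 3 * (s + 1) = 3 * s + 3 := by ring
  have e2 : 3 * (s + 1) - 2 = 3 * s + 1 := by omega
  rw [e2, e1]
  have hle : p ^ (3 * s + 1) ≤ p ^ (3 * s + 3) :=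
    Nat.pow_le_pow_right hp.pos (by omega)
  have h1 : 1 ≤ p := hp.pos
  zify [hle, h1]
  ring
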